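/- arXiv:1106.5239 — 2 statements merged into one kernel-verified Lean document; each statement's English description precedes it below -/
import Mathlib

section
/- The quadratic module in R = ℝ[x,y] generated by the set S' = {a²x + b²y + 2ab : a, b ∈ ℝ[x,y]} is not finitely generated as a quadratic module. -/
/-!
For `t > 0` the tangent `x + t²y - 2t` to the hyperbola `xy = 1` at `(t, 1/t)` is
`σ(1, -t)`, where `σ(a, b) = a²x + b²y + 2ab`, so it lies in the quadratic module `M`
generated by `S'`. It spans an extreme ray of `M`. Write `ℝ[x,y] = ℝ[y][x]`: elements of `M`
are sums of terms `r² + σ(a, b)`, whose `x`-leading coefficients are nonnegative for `y > 0`,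
so nothing cancels in a decomposition of the tangent and every term is linear in `x`. Such a
term is `s + ⟨Σ, Γ⟩` with `s ≥ 0` and a Gram matrix `Γ = [[α, w], [w, β]]` over `ℝ[y]` that is
positive semidefinite for `y > 0`. For the whole sum `α = 1`, and comparing constant
coefficients squeezes `w(y)` between `-t` and `t - 2/y`; a polynomial squeezed like this is
bounded, hence `w = -t`. So the total Gram matrix is the rank-one `[[1, -t], [-t, t²]]`, and
each term is an `ℝ[y]`-multiple of the tangent.

If finitely many `g` generated `M`, then for every `t` some nonzero `r²g` would be such a
multiple, so `g` would have `x`-degree `≤ 1` and vanish on the line `x = 2t - t²y`. A nonzero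
polynomial of `x`-degree `≤ 1` vanishes on at most one of these lines, and there are
infinitely many `t`.
-/

/-- A quadratic module in a commutative ring `R`. -/
def IsQMR {R : Type*} [CommRing R] (M : Set R) : Prop :=
  1 ∈ M ∧ (∀ a ∈ M, ∀ b ∈ M, a + b ∈ M) ∧ ∀ r : R, ∀ m ∈ M, r ^ 2 * m ∈ M

/-- The smallest quadratic module of `R` containing `G`. -/
def QMgenR {R : Type*} [CommRing R] (G : Set R) : Set R :=
  ⋂₀ {M | IsQMR M ∧ G ⊆ M}

section QuadraticModule

variable {R : Type*} [CommRing R]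

theorem QMgenR_eq_closure (S : Set R) :
    QMgenR S = AddSubmonoid.closure {x | ∃ r, ∃ u ∈ insert 1 S, x = r ^ 2 * u} := by
  apply subset_antisymm
  · intro x hx
    refine hx _ ⟨⟨?_, fun a ha b hb => add_mem ha hb, fun r m hm => ?_⟩, fun u hu => ?_⟩
    · exact AddSubmonoid.subset_closure ⟨1, 1, Set.mem_insert _ _, by ring⟩
    · induction hm using AddSubmonoid.closure_induction with
      | mem x hx =>
        obtain ⟨s, u, hu, rfl⟩ := hx
        exact AddSubmonoid.subset_closure ⟨r * s, u, hu, by ring⟩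
      | zero => simp
      | add x y _ _ hx hy => rw [mul_add]; exact add_mem hx hy
    · exact AddSubmonoid.subset_closure ⟨1, u, Set.mem_insert_of_mem _ hu, by ring⟩
  · rintro x hx M ⟨⟨h1, hadd, hmul⟩, hSM⟩
    induction hx using AddSubmonoid.closure_induction with
    | mem x hx =>
      obtain ⟨r, u, hu, rfl⟩ := hx
      rcases hu with rfl | hu
      exacts [hmul r 1 h1, hmul r u (hSM hu)]
    | zero => simpa using hmul 0 1 h1
    | add x y _ _ hx hy => exact hadd x hx y hy

theorem subset_QMgenR (S : Set R) : S ⊆ QMgenR S := by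
  rw [QMgenR_eq_closure]
  exact fun u hu => AddSubmonoid.subset_closure ⟨1, u, Set.mem_insert_of_mem _ hu, by ring⟩

def sigmaForm (x y a b : R) : R := a ^ 2 * x + b ^ 2 * y + 2 * (a * b)

theorem sq_mul_sigmaForm (r x y a b : R) :
    r ^ 2 * sigmaForm x y a b = sigmaForm x y (r * a) (r * b) := by
  unfold sigmaForm; ring

theorem map_sigmaForm {S F : Type*} [CommRing S] [FunLike F R S] [RingHomClass F R S] (f : F)
    (x y a b : R) : f (sigmaForm x y a b) = sigmaForm (f x) (f y) (f a) (f b) := by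
  simp [sigmaForm, map_ofNat]

end QuadraticModule

theorem exists_ne_zero_add_eq_of_mem_closure {M : Type*} [AddCommMonoid M] {T : Set M}
    {C : AddSubmonoid M} (hT : T ⊆ C) {x : M} (hx : x ∈ AddSubmonoid.closure T) (hx0 : x ≠ 0) :
    ∃ t ∈ T, t ≠ 0 ∧ ∃ y ∈ C, t + y = x := by
  induction hx using AddSubmonoid.closure_induction with
  | mem x hx => exact ⟨x, hx, hx0, 0, zero_mem C, add_zero x⟩
  | zero => exact absurd rfl hx0
  | add x y _ hy ihx ihy =>
    by_cases h : x = 0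
    · subst h
      obtain ⟨t, ht, ht0, z, hz, rfl⟩ := ihy (by simpa using hx0)
      exact ⟨t, ht, ht0, z, hz, (zero_add _).symm⟩
    · obtain ⟨t, ht, ht0, z, hz, rfl⟩ := ihx h
      exact ⟨t, ht, ht0, z + y, add_mem hz (AddSubmonoid.closure_le.2 hT hy),
        (add_assoc _ _ _).symm⟩

open Polynomial

namespace Polynomial

theorem eq_of_forall_pos_eval_eq {p q : ℝ[X]} (h : ∀ c > 0, p.eval c = q.eval c) : p = q := by
  rw [← sub_eq_zero]
  exact eq_zero_of_infinite_isRoot _ <| (Set.Ioi_infinite 0).mono fun c hc => by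
    simp [h c hc]

theorem eq_C_of_abs_eval_le {p : ℝ[X]} {c₀ M : ℝ} (h : ∀ c ≥ c₀, |p.eval c| ≤ M) :
    p = C (p.coeff 0) := by
  refine eq_C_of_degree_le_zero (not_lt.1 fun hp => ?_)
  obtain ⟨c, hcM, hc₀⟩ := ((p.abs_tendsto_atTop hp).eventually_gt_atTop M).and
    (Filter.eventually_ge_atTop c₀) |>.exists
  exact (h c hc₀).not_gt hcM

theorem isRoot_of_sq_mul_eq_C_mul_X_sub_C {R : Type*} [CommRing R] [IsDomain R]
    {r u : R[X]} {p d : R} (h : r ^ 2 * u = C p * (X - C d)) (hne : r ^ 2 * u ≠ 0) :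
    u.natDegree ≤ 1 ∧ u.IsRoot d := by
  have hr : r ≠ 0 := by rintro rfl; simp at hne
  have hu : u ≠ 0 := by rintro rfl; simp at hne
  have hp : p ≠ 0 := by rintro rfl; simp [h] at hne
  have hdeg := congrArg natDegree h
  rw [natDegree_mul (pow_ne_zero 2 hr) hu, natDegree_pow, natDegree_C_mul hp,
    natDegree_X_sub_C] at hdeg
  refine ⟨by omega, ?_⟩
  have hr0 : r = C (r.coeff 0) := eq_C_of_natDegree_eq_zero (by omega)
  have hev := congrArg (eval d) h
  rw [hr0] at hev hr
  simp only [eval_mul, eval_pow, eval_C, eval_sub, eval_X, sub_self, mul_zero] at hev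
  exact (mul_eq_zero.1 hev).resolve_left (pow_ne_zero 2 fun h0 => hr (by rw [h0, map_zero]))

theorem eq_of_isRoot_of_natDegree_le_one {R : Type*} [CommRing R] [IsDomain R]
    {u : R[X]} {d d' : R} (hu : u ≠ 0) (h1 : u.natDegree ≤ 1) (hd : u.IsRoot d)
    (hd' : u.IsRoot d') : d = d' := by
  have hlin := eq_X_add_C_of_natDegree_le_one h1
  rw [IsRoot.def, hlin] at hd hd'
  simp only [eval_add, eval_mul, eval_C, eval_X] at hd hd'
  have h1 : u.coeff 1 ≠ 0 := fun h0 => hu <| by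
    rw [h0, zero_mul, zero_add] at hd
    rw [hlin, h0, hd, map_zero, zero_mul, zero_add]
  exact sub_eq_zero.1 ((mul_eq_zero.1 (by linear_combination hd - hd')).resolve_left h1)

end Polynomial

-- In `ℝ[X][X]` the outer variable plays the role of `x` and the inner one that of `y`.
def LeadingNonneg (f : ℝ[X][X]) : Prop := ∀ c > 0, 0 ≤ f.leadingCoeff.eval c

namespace LeadingNonneg

variable {f g : ℝ[X][X]}

theorem eq_zero_of_leadingCoeff_add_eq_zero (hf : LeadingNonneg f) (hg : LeadingNonneg g)
    (h : f.leadingCoeff + g.leadingCoeff = 0) : f = 0 := by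
  refine leadingCoeff_eq_zero.1 (eq_of_forall_pos_eval_eq fun c hc => ?_)
  have := congrArg (eval c) h
  simp only [eval_add, eval_zero] at this ⊢
  linarith [hf c hc, hg c hc]

theorem add (hf : LeadingNonneg f) (hg : LeadingNonneg g) : LeadingNonneg (f + g) := by
  rcases lt_trichotomy f.degree g.degree with h | h | h
  · rwa [LeadingNonneg, leadingCoeff_add_of_degree_lt h]
  · by_cases hlc : f.leadingCoeff + g.leadingCoeff = 0
    · rwa [hf.eq_zero_of_leadingCoeff_add_eq_zero hg hlc, zero_add]
    · intro c hc
      rw [leadingCoeff_add_of_degree_eq h hlc, eval_add]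
      linarith [hf c hc, hg c hc]
  · rwa [LeadingNonneg, leadingCoeff_add_of_degree_lt' h]

theorem natDegree_le_add_right (hf : LeadingNonneg f) (hg : LeadingNonneg g) :
    f.natDegree ≤ (f + g).natDegree := by
  by_cases hlc : f.leadingCoeff + g.leadingCoeff = 0
  · simp [hf.eq_zero_of_leadingCoeff_add_eq_zero hg hlc]
  · exact natDegree_le_natDegree
      (degree_add_eq_of_leadingCoeff_add_ne_zero hlc ▸ le_max_left _ _)

theorem natDegree_le_add_left (hf : LeadingNonneg f) (hg : LeadingNonneg g) :
    g.natDegree ≤ (f + g).natDegree :=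
  add_comm g f ▸ hg.natDegree_le_add_right hf

theorem of_C_X_mul (hf : LeadingNonneg (C X * f)) : LeadingNonneg f := fun c hc => by
  have := hf c hc
  rw [leadingCoeff_mul, leadingCoeff_C, eval_mul, eval_X] at this
  exact nonneg_of_mul_nonneg_right (by linarith) hc

end LeadingNonneg

theorem leadingNonneg_sq (f : ℝ[X][X]) : LeadingNonneg (f ^ 2) := fun c _ => by
  rw [leadingCoeff_pow, eval_pow]; positivity

theorem leadingNonneg_C_X_mul_sq (f : ℝ[X][X]) : LeadingNonneg (C X * f ^ 2) := fun c hc => by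
  rw [leadingCoeff_mul, leadingCoeff_C, leadingCoeff_pow, eval_mul, eval_X, eval_pow]
  positivity

theorem natDegree_C_X_mul_X_sub_one : (C X * X - 1 : ℝ[X][X]).natDegree = 1 := by
  rw [← C_1, natDegree_sub_C, natDegree_C_mul_X _ X_ne_zero]

theorem leadingNonneg_sq_mul_C_X_mul_X_sub_one (f : ℝ[X][X]) :
    LeadingNonneg (f ^ 2 * (C X * X - 1)) := fun c hc => by
  rw [leadingCoeff_mul, leadingCoeff_pow, sub_eq_add_neg, ← C_1, ← C_neg,
    leadingCoeff_linear X_ne_zero, eval_mul, eval_X, eval_pow]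
  positivity

-- After multiplication by `y`, each term visibly has a leading coefficient that is
-- nonnegative for `y > 0`.
theorem C_X_mul_sq_add_sigmaForm (r a b : ℝ[X][X]) :
    C X * (r ^ 2 + sigmaForm X (C X) a b) =
      C X * r ^ 2 + ((C X * b + a) ^ 2 + a ^ 2 * (C X * X - 1)) := by
  unfold sigmaForm; ring

theorem leadingNonneg_sq_add_sigmaForm (r a b : ℝ[X][X]) :
    LeadingNonneg (r ^ 2 + sigmaForm X (C X) a b) := by
  refine LeadingNonneg.of_C_X_mul ?_
  rw [C_X_mul_sq_add_sigmaForm]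
  exact (leadingNonneg_C_X_mul_sq r).add
    ((leadingNonneg_sq _).add (leadingNonneg_sq_mul_C_X_mul_X_sub_one a))

theorem natDegree_eq_zero_of_sq_add_sigmaForm {r a b : ℝ[X][X]}
    (h : (r ^ 2 + sigmaForm X (C X) a b).natDegree ≤ 1) :
    r.natDegree = 0 ∧ a.natDegree = 0 ∧ b.natDegree = 0 := by
  rw [← natDegree_C_mul (X_ne_zero (R := ℝ)), C_X_mul_sq_add_sigmaForm] at h
  have hA := leadingNonneg_C_X_mul_sq r
  have hB := leadingNonneg_sq (C X * b + a)
  have hC := leadingNonneg_sq_mul_C_X_mul_X_sub_one a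
  have hBC := (hA.natDegree_le_add_left (hB.add hC)).trans h
  have hr := (hA.natDegree_le_add_right (hB.add hC)).trans h
  have hb := (hB.natDegree_le_add_right hC).trans hBC
  have ha := (hB.natDegree_le_add_left hC).trans hBC
  rw [natDegree_C_mul X_ne_zero, natDegree_pow] at hr
  rw [natDegree_pow] at hb
  have ha : a.natDegree = 0 := by
    rcases eq_or_ne a 0 with rfl | ha0
    · rfl
    rw [natDegree_mul (pow_ne_zero 2 ha0) (ne_zero_of_natDegree_gt (n := 0)
      (natDegree_C_X_mul_X_sub_one ▸ one_pos)), natDegree_C_X_mul_X_sub_one,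
      natDegree_pow] at ha
    omega
  refine ⟨by omega, ha, ?_⟩
  have hb' : (C X * b).natDegree ≤ 0 := by
    rw [show C X * b = (C X * b + a) - a by ring]
    exact (natDegree_sub_le _ _).trans (by omega)
  rwa [natDegree_C_mul X_ne_zero, Nat.le_zero] at hb'

noncomputable def sigmaCone : AddSubmonoid ℝ[X][X] :=
  AddSubmonoid.closure {z | ∃ r a b : ℝ[X][X], z = r ^ 2 + sigmaForm X (C X) a b}

theorem leadingNonneg_of_mem_sigmaCone {z : ℝ[X][X]} (hz : z ∈ sigmaCone) :
    LeadingNonneg z := by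
  unfold sigmaCone at hz
  induction hz using AddSubmonoid.closure_induction with
  | mem z hz =>
    obtain ⟨r, a, b, rfl⟩ := hz
    exact leadingNonneg_sq_add_sigmaForm r a b
  | zero => intro c _; simp
  | add _ _ _ _ hf hg => exact hf.add hg

def IsGramPsd (s α w β : ℝ[X]) : Prop :=
  ∀ c > 0, 0 ≤ s.eval c ∧
    ∀ v₁ v₂ : ℝ, 0 ≤ α.eval c * v₁ ^ 2 + 2 * w.eval c * v₁ * v₂ + β.eval c * v₂ ^ 2

theorem IsGramPsd.add {s α w β s' α' w' β' : ℝ[X]} (h : IsGramPsd s α w β)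
    (h' : IsGramPsd s' α' w' β') : IsGramPsd (s + s') (α + α') (w + w') (β + β') := by
  intro c hc
  obtain ⟨hs, hq⟩ := h c hc
  obtain ⟨hs', hq'⟩ := h' c hc
  simp only [eval_add]
  exact ⟨add_nonneg hs hs', fun v₁ v₂ => by linarith [hq v₁ v₂, hq' v₁ v₂]⟩

-- `z = s + α x + 2 w + β y`, i.e. `s + ⟨Σ, Γ⟩` for `Σ = [[x, 1], [1, y]]` and the Gram matrix
-- `Γ = [[α, w], [w, β]]`.
def HasPsdGram (z : ℝ[X][X]) : Prop :=
  ∃ s α w β : ℝ[X], z = C α * X + C (s + X * β + 2 * w) ∧ IsGramPsd s α w β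

theorem HasPsdGram.add {z z' : ℝ[X][X]} (hz : HasPsdGram z) (hz' : HasPsdGram z') :
    HasPsdGram (z + z') := by
  obtain ⟨s, α, w, β, rfl, h⟩ := hz
  obtain ⟨s', α', w', β', rfl, h'⟩ := hz'
  exact ⟨s + s', α + α', w + w', β + β', by simp only [map_add, map_mul]; ring, h.add h'⟩

theorem hasPsdGram_sq_add_sigmaForm (r a b : ℝ[X]) :
    HasPsdGram (C r ^ 2 + sigmaForm X (C X) (C a) (C b)) := by
  refine ⟨r ^ 2, a ^ 2, a * b, b ^ 2, ?_, fun c _ => ⟨by simp only [eval_pow]; positivity,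
    fun v₁ v₂ => ?_⟩⟩
  · simp only [sigmaForm, map_add, map_mul, map_pow, map_ofNat]
    ring
  simp only [eval_pow, eval_mul]
  nlinarith [sq_nonneg (a.eval c * v₁ + b.eval c * v₂)]

theorem hasPsdGram_of_mem_sigmaCone {z : ℝ[X][X]} (hz : z ∈ sigmaCone)
    (hdeg : z.natDegree ≤ 1) : HasPsdGram z := by
  unfold sigmaCone at hz
  induction hz using AddSubmonoid.closure_induction with
  | mem z hz =>
    obtain ⟨r, a, b, rfl⟩ := hz
    obtain ⟨hr, ha, hb⟩ := natDegree_eq_zero_of_sq_add_sigmaForm hdeg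
    rw [eq_C_of_natDegree_eq_zero hr, eq_C_of_natDegree_eq_zero ha,
      eq_C_of_natDegree_eq_zero hb]
    exact hasPsdGram_sq_add_sigmaForm _ _ _
  | zero => exact ⟨0, 0, 0, 0, by simp, fun c _ => ⟨by simp, fun _ _ => by simp⟩⟩
  | add z z' hz hz' ih ih' =>
    have hl := leadingNonneg_of_mem_sigmaCone hz
    have hl' := leadingNonneg_of_mem_sigmaCone hz'
    exact (ih ((hl.natDegree_le_add_right hl').trans hdeg)).add
      (ih' ((hl.natDegree_le_add_left hl').trans hdeg))

-- `tangent t = x + t²y - 2t` is the tangent to `xy = 1` at `(t, 1/t)`; along it `x = tangentX t`.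
noncomputable def tangentX (t : ℝ) : ℝ[X] := C (2 * t) - C (t ^ 2) * X

noncomputable def tangent (t : ℝ) : ℝ[X][X] := X - C (tangentX t)

-- The hypothesis puts `w(c)` between the roots `-t` and `t - 2/c`, which meet at `c = 1/t`.
theorem eq_C_neg_of_mul_sq_add_le {w : ℝ[X]} {t : ℝ} (ht : 0 < t)
    (h : ∀ c > 0, c * w.eval c ^ 2 + 2 * w.eval c ≤ t ^ 2 * c - 2 * t) : w = C (-t) := by
  set u := w + C t with hu_def
  have hu : ∀ c > 0, c * u.eval c ^ 2 ≤ 2 * (t * c - 1) * u.eval c := fun c hc => by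
    simp only [hu_def, eval_add, eval_C]
    nlinarith [h c hc]
  have hbound : ∀ c ≥ 1 / t, |u.eval c| ≤ 2 * t := fun c hc => by
    have hc0 : 0 < c := (one_div_pos.2 ht).trans_le hc
    have htc : 1 ≤ c * t := (div_le_iff₀ ht).1 hc
    have := hu c hc0
    rw [abs_le]
    constructor
    · by_contra! hneg
      nlinarith [mul_nonneg (sub_nonneg.2 htc) (by linarith : 0 ≤ -u.eval c),
        mul_pos hc0 (pow_pos (by linarith : 0 < -u.eval c) 2)]
    · by_contra! hpos
      nlinarith [mul_pos (mul_pos hc0 (by linarith : 0 < u.eval c)) (sub_pos.2 hpos)]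
  have h0 : u.eval (1 / t) = 0 := by
    have := hu (1 / t) (one_div_pos.2 ht)
    rw [mul_one_div_cancel ht.ne', sub_self, mul_zero, zero_mul] at this
    exact pow_eq_zero_iff two_ne_zero |>.1
      (le_antisymm (nonpos_of_mul_nonpos_right this (one_div_pos.2 ht)) (sq_nonneg _))
  have hconst := eq_C_of_abs_eval_le hbound
  rw [hconst, eval_C] at h0
  rw [h0, map_zero, hu_def, add_eq_zero_iff_eq_neg] at hconst
  rw [hconst, map_neg]

theorem IsGramPsd.eq_of_eq_tangent {t : ℝ} (ht : 0 < t) {s α w β : ℝ[X]}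
    (hpsd : IsGramPsd s α w β) (hz : C α * X + C (s + X * β + 2 * w) = tangent t) :
    α = 1 ∧ w = C (-t) ∧ ∀ c > 0, s.eval c = 0 ∧ β.eval c = t ^ 2 := by
  have hα : α = 1 := by simpa [tangent] using congrArg (coeff · 1) hz
  have hγ : s + X * β + 2 * w = -tangentX t := by
    simpa [tangent] using congrArg (coeff · 0) hz
  subst hα
  have hpt : ∀ c > 0, s.eval c + c * β.eval c + 2 * w.eval c = t ^ 2 * c - 2 * t :=
    fun c _ => by
      have := congrArg (eval c) hγ
      simp only [tangentX, eval_add, eval_mul, eval_X, eval_neg, eval_sub, eval_C,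
        eval_ofNat] at this
      linarith
  have hβ : ∀ c > 0, w.eval c ^ 2 ≤ β.eval c := fun c hc => by
    have := (hpsd c hc).2 (-w.eval c) 1
    simp only [eval_one] at this
    nlinarith
  have hw : w = C (-t) := eq_C_neg_of_mul_sq_add_le ht fun c hc => by
    nlinarith [hpt c hc, mul_le_mul_of_nonneg_left (hβ c hc) hc.le, (hpsd c hc).1]
  refine ⟨rfl, hw, fun c hc => ?_⟩
  have h₁ := hpt c hc
  have h₂ := hβ c hc
  have h₃ := (hpsd c hc).1
  rw [hw, eval_C] at h₁ h₂
  constructor <;> nlinarith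

theorem eq_C_mul_tangent_of_hasPsdGram {t : ℝ} (ht : 0 < t) {z z' : ℝ[X][X]}
    (hz : HasPsdGram z) (hz' : HasPsdGram z') (h : z + z' = tangent t) :
    ∃ p, z = C p * tangent t := by
  obtain ⟨s, α, w, β, rfl, hq⟩ := hz
  obtain ⟨s', α', w', β', rfl, hq'⟩ := hz'
  obtain ⟨hα, hw, hsβ⟩ := (hq.add hq').eq_of_eq_tangent ht
    (by rw [← h]; simp only [map_add, map_mul]; ring)
  have hpt : ∀ c > 0,
      s.eval c = 0 ∧ w.eval c = -t * α.eval c ∧ β.eval c = t ^ 2 * α.eval c := by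
    intro c hc
    obtain ⟨hs, hQ⟩ := hq c hc
    obtain ⟨hs', hQ'⟩ := hq' c hc
    obtain ⟨hss, hββ⟩ := hsβ c hc
    have hαα := congrArg (eval c) hα
    have hww := congrArg (eval c) hw
    simp only [eval_add, eval_one, eval_C] at hss hββ hαα hww
    have hα' := hQ' 1 0
    have hQt := hQ t 1
    have hQt' := hQ' t 1
    set L := α.eval c * t + w.eval c
    -- The form of `z` vanishes at `(t, 1)` and lies below `(v₁ - t v₂)²`, so `(t, 1)` is in
    -- the kernel of its Gram matrix.
    have hL : L = 0 := by
      have := hQ (t - L) 1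
      have hL2 : L ^ 2 ≤ 0 := by nlinarith
      exact pow_eq_zero_iff two_ne_zero |>.1 (le_antisymm hL2 (sq_nonneg L))
    refine ⟨by linarith, by linarith, by nlinarith⟩
  refine ⟨α, ?_⟩
  have hγ : s + X * β + 2 * w = -(α * tangentX t) := eq_of_forall_pos_eval_eq fun c hc => by
    obtain ⟨hs, hw, hβ⟩ := hpt c hc
    simp only [tangentX, eval_add, eval_mul, eval_X, eval_neg, eval_sub, eval_C, eval_ofNat,
      hs, hw, hβ]
    ring
  rw [hγ, tangent, map_neg, map_mul]
  ring

theorem eq_C_mul_tangent_of_mem_sigmaCone {t : ℝ} (ht : 0 < t) {z z' : ℝ[X][X]}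
    (hz : z ∈ sigmaCone) (hz' : z' ∈ sigmaCone) (h : z + z' = tangent t) :
    ∃ p, z = C p * tangent t := by
  have hdeg : (z + z').natDegree ≤ 1 := by rw [h, tangent, natDegree_X_sub_C]
  have hl := leadingNonneg_of_mem_sigmaCone hz
  have hl' := leadingNonneg_of_mem_sigmaCone hz'
  exact eq_C_mul_tangent_of_hasPsdGram ht
    (hasPsdGram_of_mem_sigmaCone hz ((hl.natDegree_le_add_right hl').trans hdeg))
    (hasPsdGram_of_mem_sigmaCone hz' ((hl.natDegree_le_add_left hl').trans hdeg)) h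

def sigmaValues : Set (MvPolynomial (Fin 2) ℝ) :=
  {p | ∃ a b, p = sigmaForm (MvPolynomial.X 0) (MvPolynomial.X 1) a b}

noncomputable def toPolyPoly : MvPolynomial (Fin 2) ℝ →ₐ[ℝ] ℝ[X][X] :=
  MvPolynomial.aeval ![X, C X]

theorem toPolyPoly_mem_sigmaCone {z : MvPolynomial (Fin 2) ℝ} (hz : z ∈ QMgenR sigmaValues) :
    toPolyPoly z ∈ sigmaCone := by
  rw [QMgenR_eq_closure] at hz
  induction hz using AddSubmonoid.closure_induction with
  | mem z hz =>
    obtain ⟨r, u, hu, rfl⟩ := hz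
    rcases hu with rfl | ⟨a, b, rfl⟩
    · exact AddSubmonoid.subset_closure ⟨toPolyPoly r, 0, 0, by simp [sigmaForm]⟩
    · refine AddSubmonoid.subset_closure ⟨0, toPolyPoly (r * a), toPolyPoly (r * b), ?_⟩
      rw [sq_mul_sigmaForm, map_sigmaForm]
      simp [toPolyPoly]
  | zero => simp [zero_mem]
  | add z z' _ _ hz hz' => simpa using add_mem hz hz'

theorem toPolyPoly_sigmaForm_one_neg (t : ℝ) :
    toPolyPoly (sigmaForm (MvPolynomial.X 0) (MvPolynomial.X 1) 1 (-MvPolynomial.C t)) =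
      tangent t := by
  simp only [toPolyPoly, sigmaForm, tangent, tangentX, map_add, map_mul, map_pow, map_neg,
    map_sub, map_one, map_ofNat, MvPolynomial.aeval_X, MvPolynomial.aeval_C,
    Polynomial.algebraMap_apply, Algebra.algebraMap_self, RingHom.id_apply,
    Matrix.cons_val_zero, Matrix.cons_val_one]
  ring

theorem exists_mem_insert_isRoot_tangentX {G : Set (MvPolynomial (Fin 2) ℝ)}
    (hG : QMgenR G = QMgenR sigmaValues) {t : ℝ} (ht : 0 < t) :
    ∃ u ∈ insert 1 G, toPolyPoly u ≠ 0 ∧ (toPolyPoly u).natDegree ≤ 1 ∧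
      (toPolyPoly u).IsRoot (tangentX t) := by
  set T := toPolyPoly '' {x | ∃ r, ∃ u ∈ insert 1 G, x = r ^ 2 * u}
  have hT : T ⊆ sigmaCone := by
    rintro _ ⟨g, hg, rfl⟩
    apply toPolyPoly_mem_sigmaCone
    rw [← hG, QMgenR_eq_closure]
    exact AddSubmonoid.subset_closure hg
  have htan : tangent t ∈ AddSubmonoid.closure T := by
    rw [← AddMonoidHom.map_mclosure, ← toPolyPoly_sigmaForm_one_neg]
    refine AddSubmonoid.mem_map_of_mem _ ?_
    rw [← SetLike.mem_coe, ← QMgenR_eq_closure, hG]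
    exact subset_QMgenR _ ⟨1, _, rfl⟩
  obtain ⟨_, ⟨_, ⟨r, u, hu, rfl⟩, rfl⟩, hne, y, hy, hsum⟩ :=
    exists_ne_zero_add_eq_of_mem_closure hT htan (by simp [tangent, X_sub_C_ne_zero])
  obtain ⟨p, hp⟩ :=
    eq_C_mul_tangent_of_mem_sigmaCone ht (hT ⟨_, ⟨r, u, hu, rfl⟩, rfl⟩) hy hsum
  rw [map_mul, map_pow] at hp hne
  exact ⟨u, hu, right_ne_zero_of_mul hne, isRoot_of_sq_mul_eq_C_mul_X_sub_C hp hne⟩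

open MvPolynomial

/-- The quadratic module in `ℝ[x,y]` generated by
`S' = {a²x + b²y + 2ab : a, b ∈ ℝ[x,y]}` is not finitely generated. -/
theorem stmt2 :
    ¬ ∃ G : Set (MvPolynomial (Fin 2) ℝ), G.Finite ∧
      QMgenR G = QMgenR {p : MvPolynomial (Fin 2) ℝ |
        ∃ a b : MvPolynomial (Fin 2) ℝ, p = a ^ 2 * X 0 + b ^ 2 * X 1 + 2 * (a * b)} := by
  rintro ⟨G, hGfin, hG⟩
  choose u hu hu0 hdeg hroot using fun n : ℕ =>
    exists_mem_insert_isRoot_tangentX hG (Nat.cast_add_one_pos n)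
  obtain ⟨m, n, hmn, hmn'⟩ := (hGfin.insert 1).exists_lt_map_eq_of_forall_mem hu
  have htan := eq_of_isRoot_of_natDegree_le_one (hu0 n) (hdeg n) (hmn' ▸ hroot m) (hroot n)
  have h0 := congrArg (eval 0) htan
  simp [tangentX] at h0
  omega
end

section
/- For every subset S of the symmetric n×n matrices over a commutative unital ring R, the smallest preordering T_S^n containing S equals the quadratic module generated by S together with (∏S')·I_n, where ∏S' is the set of all finite products of elements of S' = {v^T A v : A ∈ S, v ∈ R^n}. -/
open Matrix

/-- A quadratic module in `M_n(R)`. -/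
def IsQM {n : ℕ} {R : Type*} [CommRing R] (M : Set (Matrix (Fin n) (Fin n) R)) : Prop :=
  (∀ A ∈ M, A.IsSymm) ∧ (1 : Matrix (Fin n) (Fin n) R) ∈ M ∧
  (∀ a ∈ M, ∀ b ∈ M, a + b ∈ M) ∧
  ∀ (A : Matrix (Fin n) (Fin n) R), ∀ m ∈ M, Aᵀ * m * A ∈ M

/-- The smallest quadratic module of `M_n(R)` containing `S`. -/
def QMgen {n : ℕ} {R : Type*} [CommRing R] (S : Set (Matrix (Fin n) (Fin n) R)) :
    Set (Matrix (Fin n) (Fin n) R) :=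
  ⋂₀ {M | IsQM M ∧ S ⊆ M}

/-- A preordering in `M_n(R)`: a quadratic module whose intersection with the
center `R·I_n` is closed under multiplication. -/
def IsPre {n : ℕ} {R : Type*} [CommRing R] (M : Set (Matrix (Fin n) (Fin n) R)) : Prop :=
  IsQM M ∧ ∀ r s : R, r • (1 : Matrix (Fin n) (Fin n) R) ∈ M →
    s • (1 : Matrix (Fin n) (Fin n) R) ∈ M → (r * s) • (1 : Matrix (Fin n) (Fin n) R) ∈ M

/-- The smallest preordering of `M_n(R)` containing `S`. -/
def TSgen {n : ℕ} {R : Type*} [CommRing R] (S : Set (Matrix (Fin n) (Fin n) R)) :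
    Set (Matrix (Fin n) (Fin n) R) :=
  ⋂₀ {T | IsPre T ∧ S ⊆ T}

/-!
Every preordering containing `S` contains `(v ⬝ᵥ A *ᵥ v) • 1 = ∑ₖ Bₖᵀ A Bₖ` (with
`Bₖ = vecMulVec v (Pi.single k 1)`) and, being closed under products of scalars, the whole
monoid `W` these generate; this gives one inclusion.

For the other, let `C` be the semiring of sums `∑ σᵢ rᵢ²` with `σᵢ ∈ W`. The symmetric matrices
whose quadratic forms take values in `C` form a quadratic module containing the generators, so
`r • 1` in the generated quadratic module forces `r = e₀ ⬝ᵥ (r • 1) *ᵥ e₀ ∈ C`, and conversely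
`C • 1` lies in it. As `C` is closed under multiplication, the quadratic module is a preordering.
-/

section QuadraticModules

variable {n : ℕ} {R : Type*} [CommRing R]

lemma vecMulVec_transpose_mul_mul_vecMulVec_single (A : Matrix (Fin n) (Fin n) R)
    (v : Fin n → R) (k : Fin n) :
    (vecMulVec v (Pi.single k 1))ᵀ * A * vecMulVec v (Pi.single k 1)
      = (v ⬝ᵥ A *ᵥ v) • single k k 1 := by
  rw [transpose_vecMulVec, vecMulVec_mul, vecMulVec_mul_vecMulVec, vecMulVec_smul,
    ← dotProduct_mulVec, single_eq_single_vecMulVec_single]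

lemma quadForm_smul_one_eq_sum (A : Matrix (Fin n) (Fin n) R) (v : Fin n → R) :
    (v ⬝ᵥ A *ᵥ v) • (1 : Matrix (Fin n) (Fin n) R)
      = ∑ k, (vecMulVec v (Pi.single k 1))ᵀ * A * vecMulVec v (Pi.single k 1) := by
  simp only [vecMulVec_transpose_mul_mul_vecMulVec_single, ← Finset.smul_sum, sum_single_one]

namespace IsQM

variable {M : Set (Matrix (Fin n) (Fin n) R)}

lemma isSymm (hM : IsQM M) {A : Matrix (Fin n) (Fin n) R} (hA : A ∈ M) : A.IsSymm :=
  hM.1 A hA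

lemma one_mem (hM : IsQM M) : 1 ∈ M := hM.2.1

lemma add_mem (hM : IsQM M) {a b : Matrix (Fin n) (Fin n) R} (ha : a ∈ M) (hb : b ∈ M) :
    a + b ∈ M :=
  hM.2.2.1 a ha b hb

lemma transpose_mul_mul_mem (hM : IsQM M) (A : Matrix (Fin n) (Fin n) R)
    {m : Matrix (Fin n) (Fin n) R} (hm : m ∈ M) : Aᵀ * m * A ∈ M :=
  hM.2.2.2 A m hm

lemma zero_mem (hM : IsQM M) : 0 ∈ M := by
  simpa using hM.transpose_mul_mul_mem 0 hM.one_mem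

lemma sum_mem (hM : IsQM M) {ι : Type*} (s : Finset ι) {f : ι → Matrix (Fin n) (Fin n) R}
    (h : ∀ i ∈ s, f i ∈ M) : ∑ i ∈ s, f i ∈ M :=
  Finset.sum_induction f (· ∈ M) (fun _ _ => hM.add_mem) hM.zero_mem h

lemma mul_self_smul_mem (hM : IsQM M) (r : R) {m : Matrix (Fin n) (Fin n) R} (hm : m ∈ M) :
    (r * r) • m ∈ M := by
  simpa [smul_smul] using hM.transpose_mul_mul_mem (r • 1) hm

lemma quadForm_smul_one_mem (hM : IsQM M) {A : Matrix (Fin n) (Fin n) R} (hA : A ∈ M)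
    (v : Fin n → R) : (v ⬝ᵥ A *ᵥ v) • (1 : Matrix (Fin n) (Fin n) R) ∈ M := by
  rw [quadForm_smul_one_eq_sum]
  exact hM.sum_mem _ fun k _ => hM.transpose_mul_mul_mem _ hA

end IsQM

lemma isQM_sInter {𝓜 : Set (Set (Matrix (Fin n) (Fin n) R))} (h𝓜 : ∀ M ∈ 𝓜, IsQM M)
    (hne : 𝓜.Nonempty) : IsQM (⋂₀ 𝓜) := by
  obtain ⟨M₀, hM₀⟩ := hne
  refine ⟨fun A hA => (h𝓜 M₀ hM₀).isSymm (hA M₀ hM₀), fun M hM => (h𝓜 M hM).one_mem,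
    fun a ha b hb M hM => (h𝓜 M hM).add_mem (ha M hM) (hb M hM),
    fun A m hm M hM => (h𝓜 M hM).transpose_mul_mul_mem A (hm M hM)⟩

lemma isPre_sInter {𝓣 : Set (Set (Matrix (Fin n) (Fin n) R))} (h𝓣 : ∀ T ∈ 𝓣, IsPre T)
    (hne : 𝓣.Nonempty) : IsPre (⋂₀ 𝓣) :=
  ⟨isQM_sInter (fun T hT => (h𝓣 T hT).1) hne,
    fun r s hr hs T hT => (h𝓣 T hT).2 r s (hr T hT) (hs T hT)⟩

lemma isQM_setOf_isSymm : IsQM {A : Matrix (Fin n) (Fin n) R | A.IsSymm} :=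
  ⟨fun _ hA => hA, isSymm_one, fun _ ha _ hb => ha.add hb, fun A m (hm : m.IsSymm) =>
    show (Aᵀ * m * A)ᵀ = _ by
      rw [transpose_mul, transpose_mul, transpose_transpose, hm.eq, mul_assoc]⟩

lemma isPre_setOf_isSymm : IsPre {A : Matrix (Fin n) (Fin n) R | A.IsSymm} :=
  ⟨isQM_setOf_isSymm, fun r s _ _ => isSymm_one.smul (r * s)⟩

section Generated

variable {S M : Set (Matrix (Fin n) (Fin n) R)}

lemma subset_QMgen (S : Set (Matrix (Fin n) (Fin n) R)) : S ⊆ QMgen S :=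
  fun _ hA _ hM => hM.2 hA

lemma QMgen_subset (hM : IsQM M) (hSM : S ⊆ M) : QMgen S ⊆ M :=
  Set.sInter_subset_of_mem ⟨hM, hSM⟩

lemma isQM_QMgen (hS : ∀ A ∈ S, A.IsSymm) : IsQM (QMgen S) :=
  isQM_sInter (fun _ hM => hM.1) ⟨_, isQM_setOf_isSymm, hS⟩

lemma subset_TSgen (S : Set (Matrix (Fin n) (Fin n) R)) : S ⊆ TSgen S :=
  fun _ hA _ hT => hT.2 hA

lemma TSgen_subset (hT : IsPre M) (hST : S ⊆ M) : TSgen S ⊆ M :=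
  Set.sInter_subset_of_mem ⟨hT, hST⟩

lemma isPre_TSgen (hS : ∀ A ∈ S, A.IsSymm) : IsPre (TSgen S) :=
  isPre_sInter (fun _ hT => hT.1) ⟨_, isPre_setOf_isSymm, hS⟩

end Generated

def quadValues (S : Set (Matrix (Fin n) (Fin n) R)) : Set R :=
  {x : R | ∃ A ∈ S, ∃ v : Fin n → R, x = v ⬝ᵥ A.mulVec v}

lemma IsPre.smul_one_mem_of_mem_closure_quadValues {S T : Set (Matrix (Fin n) (Fin n) R)}
    (hT : IsPre T) (hST : S ⊆ T) {r : R} (hr : r ∈ Submonoid.closure (quadValues S)) :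
    r • (1 : Matrix (Fin n) (Fin n) R) ∈ T := by
  induction hr using Submonoid.closure_induction with
  | mem x hx =>
    obtain ⟨A, hA, v, rfl⟩ := hx
    exact hT.1.quadForm_smul_one_mem (hST hA) v
  | one => simpa using hT.1.one_mem
  | mul x y _ _ hx hy => exact hT.2 x y hx hy

def Submonoid.weightedSquares (W : Submonoid R) : Submonoid R where
  carrier := {x | ∃ σ ∈ W, ∃ r, x = σ * r * r}
  one_mem' := ⟨1, W.one_mem, 1, by ring⟩
  mul_mem' := by
    rintro _ _ ⟨σ, hσ, r, rfl⟩ ⟨τ, hτ, s, rfl⟩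
    exact ⟨σ * τ, W.mul_mem hσ hτ, r * s, by ring⟩

def Submonoid.weightedSOS (W : Submonoid R) : Subsemiring R :=
  W.weightedSquares.subsemiringClosure

lemma Submonoid.mul_mul_self_mem_weightedSOS {W : Submonoid R} {σ : R} (hσ : σ ∈ W) (r : R) :
    σ * r * r ∈ W.weightedSOS :=
  AddSubmonoid.subset_closure ⟨σ, hσ, r, rfl⟩

lemma IsQM.smul_one_mem_of_mem_weightedSOS {M : Set (Matrix (Fin n) (Fin n) R)} (hM : IsQM M)
    {W : Submonoid R} (hW : ∀ σ ∈ W, σ • (1 : Matrix (Fin n) (Fin n) R) ∈ M) {c : R}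
    (hc : c ∈ W.weightedSOS) : c • (1 : Matrix (Fin n) (Fin n) R) ∈ M := by
  induction hc using AddSubmonoid.closure_induction with
  | mem x hx =>
    obtain ⟨σ, hσ, r, rfl⟩ := hx
    rw [mul_assoc, mul_comm, mul_smul]
    exact hM.mul_self_smul_mem r (hW σ hσ)
  | zero => simpa using hM.zero_mem
  | add x y _ _ hx hy => simpa only [add_smul] using hM.add_mem hx hy

def quadFormsIn {K : Type*} [SetLike K R] (C : K) : Set (Matrix (Fin n) (Fin n) R) :=
  {m | m.IsSymm ∧ ∀ v, v ⬝ᵥ m *ᵥ v ∈ C}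

lemma isQM_quadFormsIn {K : Type*} [SetLike K R] [AddSubmonoidClass K R] {C : K}
    (hC : ∀ r, r * r ∈ C) :
    IsQM (quadFormsIn C : Set (Matrix (Fin n) (Fin n) R)) := by
  refine ⟨fun _ hm => hm.1, ⟨isSymm_one, fun v => ?_⟩, ?_, ?_⟩
  · simpa [dotProduct] using sum_mem fun i _ => hC (v i)
  · rintro a ⟨ha, ha'⟩ b ⟨hb, hb'⟩
    refine ⟨ha.add hb, fun v => ?_⟩
    simpa only [add_mulVec, dotProduct_add] using add_mem (ha' v) (hb' v)
  · rintro A m ⟨hm, hm'⟩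
    refine ⟨isQM_setOf_isSymm.transpose_mul_mul_mem A hm, fun v => ?_⟩
    rw [← mulVec_mulVec, ← mulVec_mulVec, dotProduct_mulVec, vecMul_transpose]
    exact hm' (A *ᵥ v)

lemma mem_of_smul_one_mem_quadFormsIn [NeZero n] {K : Type*} [SetLike K R] {C : K} {r : R}
    (hr : r • (1 : Matrix (Fin n) (Fin n) R) ∈ quadFormsIn C) : r ∈ C := by
  simpa [single_dotProduct] using hr.2 (Pi.single 0 1)

section Preordering

variable {S : Set (Matrix (Fin n) (Fin n) R)} {W : Submonoid R}

lemma QMgen_subset_quadFormsIn (hS : ∀ A ∈ S, A.IsSymm) (hW : quadValues S ⊆ W) :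
    QMgen (S ∪ (fun r : R => r • (1 : Matrix (Fin n) (Fin n) R)) '' W)
      ⊆ quadFormsIn W.weightedSOS := by
  have hsq (r : R) : r * r ∈ W.weightedSOS := by
    simpa using W.mul_mul_self_mem_weightedSOS W.one_mem r
  refine QMgen_subset (isQM_quadFormsIn hsq) ?_
  rintro _ (hA | ⟨σ, hσ, rfl⟩)
  · refine ⟨hS _ hA, fun v => ?_⟩
    simpa using W.mul_mul_self_mem_weightedSOS (hW ⟨_, hA, v, rfl⟩) 1
  · refine ⟨isSymm_one.smul σ, fun v => ?_⟩
    rw [smul_mulVec, one_mulVec, dotProduct_smul, smul_eq_mul, dotProduct, Finset.mul_sum]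
    refine sum_mem fun i _ => ?_
    simpa only [mul_assoc] using W.mul_mul_self_mem_weightedSOS hσ (v i)

lemma isPre_QMgen [NeZero n] (hS : ∀ A ∈ S, A.IsSymm) (hW : quadValues S ⊆ W) :
    IsPre (QMgen (S ∪ (fun r : R => r • (1 : Matrix (Fin n) (Fin n) R)) '' W)) := by
  have hQ := isQM_QMgen (S := S ∪ (fun r : R => r • (1 : Matrix (Fin n) (Fin n) R)) '' W)
    (by rintro _ (hA | ⟨σ, -, rfl⟩); exacts [hS _ hA, isSymm_one.smul σ])
  refine ⟨hQ, fun r s hr hs => hQ.smul_one_mem_of_mem_weightedSOS (W := W) ?_ (mul_mem ?_ ?_)⟩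
  · exact fun σ hσ => subset_QMgen _ (Or.inr ⟨σ, hσ, rfl⟩)
  · exact mem_of_smul_one_mem_quadFormsIn (QMgen_subset_quadFormsIn hS hW hr)
  · exact mem_of_smul_one_mem_quadFormsIn (QMgen_subset_quadFormsIn hS hW hs)

end Preordering

end QuadraticModules

theorem stmt5 {n : ℕ} [NeZero n] {R : Type*} [CommRing R]
    (S : Set (Matrix (Fin n) (Fin n) R)) (hS : ∀ A ∈ S, A.IsSymm) :
    TSgen S = QMgen (S ∪ (fun r : R => r • (1 : Matrix (Fin n) (Fin n) R)) ''
      (Submonoid.closure {x : R | ∃ A ∈ S, ∃ v : Fin n → R, x = v ⬝ᵥ A.mulVec v} :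
        Submonoid R)) := by
  change TSgen S = QMgen (S ∪ (· • 1) '' (Submonoid.closure (quadValues S) : Set R))
  have hT := isPre_TSgen hS
  apply (TSgen_subset (isPre_QMgen hS Submonoid.subset_closure)
    (Set.subset_union_left.trans (subset_QMgen _))).antisymm
  refine QMgen_subset hT.1 (Set.union_subset (subset_TSgen S) ?_)
  rintro _ ⟨r, hr, rfl⟩
  exact hT.smul_one_mem_of_mem_closure_quadValues (subset_TSgen S) hr
end
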